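/- Let c ∈ (0,1) and let J ≥ 2 be an integer. Let Γ : {1,…,J} × ℤ → ℝ be a function with 0 ≤ Γ(k, I) ≤ 1 for all k and I, such that Γ(k, I) = 1 whenever I ≤ 0, Γ(1, I) = 0 whenever I ≥ 1, and such that for all 1 ≤ k < J and all integers I ≥ 1: Γ(k+1, I) ≤ (1−c)^{√I − 1} + I^{1 + (k−1)/2} · Γ(k, ⌊√I⌋ − k + 1). Set c₃ = max(2, −log(1−c)) and, for ε ∈ (0,1) and integers k ≥ 2, I₀(ε, k) = ( c₃ · (k·2^k/ε) · log(k·2^k/ε) )^{2^{k−1}}. Then for every ε ∈ (0,1), every integer k with 2 ≤ k ≤ J, and every integer I ≥ I₀(ε, k), one has Γ(k, I) ≤ exp( (log(1−c) + ε) · I^{1/2^{k−1}} ). -/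

import Mathlib

/-- The threshold `I₀(ε,k) = (c₃·(k·2^k/ε)·log(k·2^k/ε))^{2^{k−1}}`. -/
noncomputable def Ithr (c₃ ε : ℝ) (k : ℕ) : ℝ :=
  (c₃ * ((k * 2 ^ k) / ε) * Real.log ((k * 2 ^ k) / ε)) ^ (2 ^ (k - 1))


private lemma two_le_log {x : ℝ} (hx : 8 ≤ x) : 2 ≤ Real.log x := by
  rw [Real.le_log_iff_exp_le (by linarith)]
  have h := Real.exp_one_lt_d9
  have h2 : Real.exp 2 = Real.exp 1 * Real.exp 1 := by
    rw [← Real.exp_add]; norm_num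
  nlinarith [Real.exp_pos 1]

private lemma le_rpow_inv' {Y x : ℝ} (hY : 0 ≤ Y) {n : ℕ} (hn : 0 < n)
    (h : Y ^ n ≤ x) : Y ≤ x ^ ((1 : ℝ) / (n : ℝ)) := by
  have hx : 0 ≤ x := le_trans (pow_nonneg hY n) h
  have hn' : ((n : ℝ)) ≠ 0 := by positivity
  have key : Y = (Y ^ n) ^ ((1 : ℝ) / (n : ℝ)) := by
    rw [← Real.rpow_natCast Y n, ← Real.rpow_mul hY]
    rw [mul_one_div, div_self hn', Real.rpow_one]
  rw [key]
  exact Real.rpow_le_rpow (pow_nonneg hY n) h (by positivity)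

private lemma four_X_le {c₃ X : ℝ} (hc₃ : 2 ≤ c₃) (hX : 0 ≤ X)
    (lX : 2 ≤ Real.log X) : 4 * X ≤ c₃ * X * Real.log X := by
  nlinarith [mul_nonneg hX (mul_nonneg (by linarith : (0:ℝ) ≤ c₃ - 2)
      (by linarith : (0:ℝ) ≤ Real.log X - 2)),
    mul_nonneg hX (by linarith : (0:ℝ) ≤ Real.log X - 2),
    mul_nonneg hX (by linarith : (0:ℝ) ≤ c₃ - 2)]

private lemma key_ineq {c₃ X t : ℝ} (hc₃ : 2 ≤ c₃) (hX : 8 ≤ X)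
    (ht : c₃ * X * Real.log X ≤ t) :
    X / 2 * Real.log t + c₃ * X / 2 ≤ t := by
  have lX : 2 ≤ Real.log X := two_le_log hX
  have hX0 : (0:ℝ) ≤ X := by linarith
  have hp1 : (0:ℝ) ≤ X * ((c₃ - 2) * (Real.log X - 2)) :=
    mul_nonneg hX0 (mul_nonneg (by linarith) (by linarith))
  have hp2 : (0:ℝ) ≤ X * (Real.log X - 2) := mul_nonneg hX0 (by linarith)
  have hp3 : (0:ℝ) ≤ X * (c₃ - 2) := mul_nonneg hX0 (by linarith)
  set Y := c₃ * X * Real.log X with hYdef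
  have hY4X : 4 * X ≤ Y := by rw [hYdef]; nlinarith
  have hYpos : 0 < Y := by linarith
  have htpos : 0 < t := lt_of_lt_of_le hYpos ht
  have hlt : Real.log Y ≤ Real.log t := Real.log_le_log hYpos ht
  have h1 : Y * (Real.log t - Real.log Y) ≤ t - Y := by
    have h0 := Real.log_le_sub_one_of_pos (div_pos htpos hYpos)
    rw [Real.log_div htpos.ne' hYpos.ne'] at h0
    calc Y * (Real.log t - Real.log Y) ≤ Y * (t / Y - 1) :=
          mul_le_mul_of_nonneg_left h0 hYpos.le
      _ = t - Y := by field_simp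
  have h2 : Real.log Y = Real.log c₃ + Real.log X + Real.log (Real.log X) := by
    rw [Real.log_mul (by positivity) (by positivity),
        Real.log_mul (by positivity) (by positivity)]
  have h3 : Real.log c₃ ≤ c₃ - 1 := Real.log_le_sub_one_of_pos (by linarith)
  have h4 : Real.log (Real.log X) ≤ Real.log X - 1 :=
    Real.log_le_sub_one_of_pos (by linarith)
  have hXY : X / 2 ≤ Y := by linarith
  have h5 : X / 2 * (Real.log t - Real.log Y) ≤ t - Y := by
    nlinarith [mul_le_mul_of_nonneg_right hXY (sub_nonneg.mpr hlt)]
  have h6 : X / 2 * Real.log Y + c₃ * X / 2 ≤ Y := by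
    rw [h2, hYdef]
    nlinarith
  nlinarith

set_option maxHeartbeats 2000000 in
/-- Abstract form of Lemma `tilde_Gamma`: any `[0,1]`-valued `Γ(k,I)` satisfying the
boundary conditions and the recursion inherits the stretched-exponential decay
`Γ(k,I) ≤ exp((log(1−c)+ε)·I^{1/2^{k−1}})` for `I ≥ I₀(ε,k)`. -/
theorem gamma_recursion_decay (c : ℝ) (hc : c ∈ Set.Ioo (0 : ℝ) 1) (J : ℕ) (hJ : 2 ≤ J)
    (Γ : ℕ → ℤ → ℝ)
    (hΓ01 : ∀ k : ℕ, ∀ I : ℤ, 1 ≤ k → k ≤ J → 0 ≤ Γ k I ∧ Γ k I ≤ 1)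
    (hΓ_nonpos : ∀ k : ℕ, ∀ I : ℤ, 1 ≤ k → k ≤ J → I ≤ 0 → Γ k I = 1)
    (hΓ_one : ∀ I : ℤ, 1 ≤ I → Γ 1 I = 0)
    (hrec : ∀ k : ℕ, 1 ≤ k → k < J → ∀ I : ℤ, 1 ≤ I →
      Γ (k + 1) I ≤ (1 - c) ^ (Real.sqrt I - 1)
        + (I : ℝ) ^ (1 + ((k : ℝ) - 1) / 2) * Γ k (⌊Real.sqrt I⌋ - (k : ℤ) + 1)) :
    ∀ ε : ℝ, ε ∈ Set.Ioo (0 : ℝ) 1 → ∀ k : ℕ, 2 ≤ k → k ≤ J → ∀ I : ℤ,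
      Ithr (max 2 (-Real.log (1 - c))) ε k ≤ (I : ℝ) →
      Γ k I ≤ Real.exp ((Real.log (1 - c) + ε) * (I : ℝ) ^ ((1 : ℝ) / 2 ^ (k - 1))) := by
  obtain ⟨hc0, hc1⟩ := hc
  set L := Real.log (1 - c) with hLdef
  set c₃ := max 2 (-L) with hc₃def
  have h1c : (0:ℝ) < 1 - c := by linarith
  have hLneg : L < 0 := Real.log_neg h1c (by linarith)
  have hc₃2 : (2:ℝ) ≤ c₃ := le_max_left _ _
  have hLc₃ : -L ≤ c₃ := le_max_right _ _
  suffices H : ∀ k : ℕ, 2 ≤ k → k ≤ J → ∀ ε : ℝ, ε ∈ Set.Ioo (0:ℝ) 1 → ∀ I : ℤ,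
      Ithr c₃ ε k ≤ (I:ℝ) →
      Γ k I ≤ Real.exp ((L + ε) * (I:ℝ) ^ ((1:ℝ)/2^(k-1))) by
    intro ε hε k hk2 hkJ I hI
    exact H k hk2 hkJ ε hε I hI
  intro k hk2
  induction k, hk2 using Nat.le_induction with
  | base =>
    intro h2J ε hε I hI
    obtain ⟨hε0, hε1⟩ := hε
    have hIthr : Ithr c₃ ε 2 = (c₃ * (8/ε) * Real.log (8/ε)) ^ 2 := by
      norm_num [Ithr]
    have hX8 : (8:ℝ) ≤ 8/ε := by
      rw [le_div_iff₀ hε0]; nlinarith only [hε0, hε1]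
    have lX : 2 ≤ Real.log (8/ε) := two_le_log hX8
    have hY32 : (32:ℝ) ≤ c₃ * (8/ε) * Real.log (8/ε) := by
      linarith only [four_X_le hc₃2 (by linarith only [hX8] : (0:ℝ) ≤ 8/ε) lX, hX8]
    have hYI : (c₃ * (8/ε) * Real.log (8/ε)) ^ 2 ≤ (I:ℝ) := by rw [← hIthr]; exact hI
    have hI1 : (1:ℝ) ≤ (I:ℝ) := by
      nlinarith only [hY32, hYI, sq_nonneg (c₃ * (8/ε) * Real.log (8/ε) - 32)]
    have hIint : (1:ℤ) ≤ I := by exact_mod_cast hI1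
    have hIpos : (0:ℝ) < (I:ℝ) := by linarith
    have hYsq : c₃ * (8/ε) * Real.log (8/ε) ≤ Real.sqrt I := by
      rw [Real.sqrt_eq_rpow]
      have h := le_rpow_inv' (show (0:ℝ) ≤ c₃ * (8/ε) * Real.log (8/ε) by linarith)
        (show 0 < 2 by norm_num) hYI
      have he : ((1:ℝ)/((2:ℕ):ℝ)) = (1/2 : ℝ) := by norm_num
      rwa [he] at h
    have hfl : (1:ℤ) ≤ ⌊Real.sqrt (I:ℝ)⌋ := by
      rw [Int.le_floor]
      push_cast
      linarith only [hYsq, hY32]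
    have hrec1 := hrec 1 le_rfl (by omega) I hIint
    have harg : ⌊Real.sqrt (I:ℝ)⌋ - ((1:ℕ):ℤ) + 1 = ⌊Real.sqrt (I:ℝ)⌋ := by push_cast; ring
    rw [harg, hΓ_one _ hfl, mul_zero, add_zero] at hrec1
    have hpow : (1-c) ^ (Real.sqrt I - 1) = Real.exp (L * (Real.sqrt I - 1)) := by
      rw [Real.rpow_def_of_pos h1c]
    have hgoalexp : (I:ℝ) ^ ((1:ℝ)/2^(2-1)) = Real.sqrt I := by
      rw [Real.sqrt_eq_rpow]; norm_num
    have hεY : ε * (c₃ * (8/ε) * Real.log (8/ε)) = c₃ * 8 * Real.log (8/ε) := by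
      field_simp
    have hεsq : c₃ ≤ ε * Real.sqrt I := by
      have h1 : ε * (c₃ * (8/ε) * Real.log (8/ε)) ≤ ε * Real.sqrt I :=
        mul_le_mul_of_nonneg_left hYsq hε0.le
      rw [hεY] at h1
      nlinarith only [h1, lX, hc₃2,
        mul_nonneg (show (0:ℝ) ≤ c₃ by linarith only [hc₃2])
          (show (0:ℝ) ≤ 8 * Real.log (8/ε) - 1 by linarith only [lX])]
    calc Γ 2 I ≤ (1-c) ^ (Real.sqrt I - 1) := by norm_num at hrec1; exact hrec1
      _ ≤ Real.exp ((L + ε) * (I:ℝ) ^ ((1:ℝ)/2^(2-1))) := by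
          rw [hpow, Real.exp_le_exp, hgoalexp]
          have hsqpos : (0:ℝ) ≤ Real.sqrt I := Real.sqrt_nonneg _
          linarith only [hεsq, hLc₃, hsqpos]
  | succ n hn2 IH =>
    intro hn1J ε hε I hI
    obtain ⟨hε0, hε1⟩ := hε
    have hnJ : n ≤ J := by omega
    have hn1 : n - 1 + 1 = n := by omega
    have hn2R : (2:ℝ) ≤ (n:ℝ) := by exact_mod_cast hn2
    have hn0 : (0:ℝ) < (n:ℝ) := by linarith
    have h2n8 : (8:ℝ) ≤ 2^(n+1) := by
      calc (8:ℝ) = 2^3 := by norm_num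
        _ ≤ 2^(n+1) := by apply pow_le_pow_right₀ (by norm_num) (by omega)
    -- goal exponent simplification
    simp only [Nat.add_sub_cancel]
    set X : ℝ := ((n:ℝ)+1) * 2^(n+1) / ε with hXdef
    set X' : ℝ := (n:ℝ) * 2^(n+1) / ε with hX'def
    have h24 : (24:ℝ) ≤ ((n:ℝ)+1)*2^(n+1) := by
      nlinarith only [h2n8, hn2R, mul_nonneg (show (0:ℝ) ≤ (n:ℝ)+1-3 by linarith only [hn2R])
        (show (0:ℝ) ≤ 2^(n+1)-8 by linarith only [h2n8])]
    have h16 : (16:ℝ) ≤ (n:ℝ)*2^(n+1) := by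
      nlinarith only [h2n8, hn2R, mul_nonneg (show (0:ℝ) ≤ (n:ℝ)-2 by linarith only [hn2R])
        (show (0:ℝ) ≤ 2^(n+1)-8 by linarith only [h2n8])]
    have hX8 : (8:ℝ) ≤ X := by
      rw [hXdef, le_div_iff₀ hε0]
      linarith only [h24, hε0, hε1]
    have hX'8 : (8:ℝ) ≤ X' := by
      rw [hX'def, le_div_iff₀ hε0]
      linarith only [h16, hε0, hε1]
    have hX'8n : 8 * (n:ℝ) ≤ X' := by
      rw [hX'def, le_div_iff₀ hε0]
      have ha := mul_le_mul_of_nonneg_left h2n8 (le_of_lt hn0)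
      have hb : 8*(n:ℝ)*ε ≤ 8*(n:ℝ) := by
        nlinarith only [mul_nonneg hn0.le (show (0:ℝ) ≤ 1-ε by linarith only [hε1])]
      linarith only [ha, hb]
    have lX : 2 ≤ Real.log X := two_le_log hX8
    have lX' : 2 ≤ Real.log X' := two_le_log hX'8
    have hX'X : X' ≤ X := by
      rw [hXdef, hX'def, div_le_div_iff₀ hε0 hε0]
      linarith only [mul_pos (pow_pos (show (0:ℝ)<2 by norm_num) (n+1)) hε0]
    set Y : ℝ := c₃ * X * Real.log X with hYdef
    set Y' : ℝ := c₃ * X' * Real.log X' with hY'def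
    have hY4X : 4 * X ≤ Y := by rw [hYdef]; exact four_X_le hc₃2 (by linarith) lX
    have hY'4X' : 4 * X' ≤ Y' := by rw [hY'def]; exact four_X_le hc₃2 (by linarith) lX'
    have hYpos : (0:ℝ) < Y := by linarith
    have hY'pos : (0:ℝ) < Y' := by linarith
    have hY'32n : 32 * (n:ℝ) ≤ Y' := by linarith
    have hεX : ε * X = ((n:ℝ)+1) * 2^(n+1) := by rw [hXdef]; field_simp
    have hcast : ((n+1 : ℕ) : ℝ) = (n:ℝ)+1 := by push_cast; ring
    have hIthr : Ithr c₃ ε (n+1) = Y ^ (2^n) := by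
      simp only [Ithr, Nat.add_sub_cancel, hcast, hYdef, hXdef]
    set M : ℕ := 2^(n-1) with hMdef
    have hM1 : 1 ≤ M := Nat.one_le_two_pow
    have hMne : M ≠ 0 := by omega
    have hMcast : ((M:ℕ):ℝ) = (2:ℝ)^(n-1) := by rw [hMdef]; push_cast; ring
    have hMn : (n:ℝ) ≤ (M:ℝ) := by
      have h1 : n ≤ 2^(n-1) := by
        have : n-1 < 2^(n-1) := Nat.lt_two_pow_self
        omega
      rw [hMdef]; exact_mod_cast h1
    have hIthr' : Ithr c₃ (ε/2) n = Y' ^ M := by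
      have hdiv : ((n:ℝ) * 2^n) / (ε/2) = (n:ℝ)*2^(n+1)/ε := by
        rw [pow_succ]; field_simp
      show (c₃ * (((n:ℕ):ℝ) * 2 ^ n / (ε / 2)) * Real.log (((n:ℕ):ℝ) * 2 ^ n / (ε / 2)))
          ^ 2 ^ (n - 1) = Y' ^ M
      rw [hdiv, hY'def, hX'def, hMdef]
    have h2M : (2:ℝ)^n = (M:ℝ) * 2 := by
      rw [hMcast, ← pow_succ, hn1]
    have hIY : Y ^ (2^n : ℕ) ≤ (I:ℝ) := by rw [← hIthr]; exact hI
    have hI1 : (1:ℝ) ≤ (I:ℝ) := by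
      have h1Y : (1:ℝ) ≤ Y := by linarith
      calc (1:ℝ) = 1^(2^n : ℕ) := (one_pow _).symm
        _ ≤ Y^(2^n : ℕ) := pow_le_pow_left₀ zero_le_one h1Y _
        _ ≤ (I:ℝ) := hIY
    have hIpos : (0:ℝ) < (I:ℝ) := by linarith
    have hIint : (1:ℤ) ≤ I := by exact_mod_cast hI1
    set t : ℝ := (I:ℝ) ^ ((1:ℝ)/2^n) with htdef
    have htY : Y ≤ t := by
      have h := le_rpow_inv' hYpos.le (pow_pos two_pos n) hIY
      have he : (1:ℝ)/((2^n : ℕ):ℝ) = (1:ℝ)/2^n := by push_cast; ring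
      rwa [he] at h
    have ht1 : (1:ℝ) ≤ t := by linarith
    have htpos : (0:ℝ) < t := by linarith
    have htM : t ≤ t ^ M := le_self_pow₀ ht1 hMne
    have hsqrt : Real.sqrt I = t ^ M := by
      rw [Real.sqrt_eq_rpow, htdef, ← Real.rpow_natCast ((I:ℝ) ^ ((1:ℝ)/2^n)) M,
        ← Real.rpow_mul hIpos.le]
      congr 1
      rw [hMcast]
      rw [h2M, hMcast]
      field_simp
    rcases le_or_gt 0 (L + ε) with hLε | hLε
    · calc Γ (n+1) I ≤ 1 := (hΓ01 (n+1) I (by omega) hn1J).2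
        _ ≤ Real.exp ((L+ε) * t) := by
            calc (1:ℝ) = Real.exp 0 := Real.exp_zero.symm
              _ ≤ _ := Real.exp_le_exp.mpr (mul_nonneg hLε htpos.le)
    have hLε2 : L + ε/2 < 0 := by linarith
    have hrecn := hrec n (by omega) (by omega) I hIint
    set J' : ℤ := ⌊Real.sqrt (I:ℝ)⌋ - (n:ℤ) + 1 with hJ'def
    have hJ'real : t^M - (n:ℝ) ≤ (J' : ℝ) := by
      have hfl := Int.sub_one_lt_floor (Real.sqrt (I:ℝ))
      rw [hJ'def]
      push_cast
      rw [← hsqrt]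
      linarith only [hfl]
    have hYY' : (1 + 1/(n:ℝ)) * Y' ≤ Y := by
      have hXX' : X = (1 + 1/(n:ℝ)) * X' := by
        rw [hXdef, hX'def]; field_simp
      have hlog : Real.log X' ≤ Real.log X := Real.log_le_log (by linarith) hX'X
      have h1 : c₃ * ((1+1/(n:ℝ))*X') * Real.log X' ≤ c₃ * ((1+1/(n:ℝ))*X') * Real.log X := by
        apply mul_le_mul_of_nonneg_left hlog
        exact mul_nonneg (by linarith only [hc₃2])
          (mul_nonneg (by positivity) (by linarith only [hX'8]))
      calc (1+1/(n:ℝ)) * Y' = c₃ * ((1+1/(n:ℝ))*X') * Real.log X' := by rw [hY'def]; ring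
        _ ≤ c₃ * ((1+1/(n:ℝ))*X') * Real.log X := h1
        _ = c₃ * X * Real.log X := by rw [← hXX']
        _ = Y := by rw [hYdef]
    have hbern : 1 + (M:ℝ)/(n:ℝ) ≤ (1 + 1/(n:ℝ))^M := by
      have h0 : (0:ℝ) ≤ 1/(n:ℝ) := by positivity
      have h := one_add_mul_le_pow (show (-2:ℝ) ≤ 1/(n:ℝ) by linarith) M
      calc 1 + (M:ℝ)/(n:ℝ) = 1 + M * (1/(n:ℝ)) := by ring
        _ ≤ _ := h
    have hY'selfpow : Y' ≤ Y' ^ M := le_self_pow₀ (by linarith) hMne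
    have hkey2 : Y'^M + (n:ℝ) ≤ t^M := by
      have hd : (n:ℝ) ≤ (M:ℝ)/(n:ℝ) * Y'^M := by
        have h1 : (1:ℝ) ≤ (M:ℝ)/(n:ℝ) := (one_le_div hn0).mpr hMn
        have h2 : (n:ℝ) ≤ Y'^M := by linarith only [hY'32n, hY'selfpow, hn0]
        calc (n:ℝ) = 1 * (n:ℝ) := (one_mul _).symm
          _ ≤ (M:ℝ)/(n:ℝ) * Y'^M := mul_le_mul h1 h2 (le_of_lt hn0) (by positivity)
      have h3 : Y'^M * (1 + (M:ℝ)/(n:ℝ)) ≤ Y'^M * (1+1/(n:ℝ))^M :=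
        mul_le_mul_of_nonneg_left hbern (pow_nonneg hY'pos.le M)
      have h4 : ((1+1/(n:ℝ)) * Y')^M = (1+1/(n:ℝ))^M * Y'^M := mul_pow _ _ _
      have h5 : ((1+1/(n:ℝ)) * Y')^M ≤ Y^M := pow_le_pow_left₀ (by positivity) hYY' M
      have h6 : Y^M ≤ t^M := pow_le_pow_left₀ hYpos.le htY M
      linarith only [hd, h3, h4.le, h4.ge, h5, h6]
    have hIH' : Ithr c₃ (ε/2) n ≤ (J' : ℝ) := by
      rw [hIthr']; linarith
    have hΓn := IH hnJ (ε/2) ⟨by linarith, by linarith⟩ J' hIH'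
    set u : ℝ := (J':ℝ) ^ ((1:ℝ)/2^(n-1)) with hudef
    have htMn : (n:ℝ) < t^M := by linarith only [hkey2, pow_pos hY'pos M]
    have htMpos : (0:ℝ) < t^M := pow_pos htpos M
    have ha0 : (0:ℝ) < 1 - (n:ℝ)/t^M := by
      rw [sub_pos, div_lt_one htMpos]; exact htMn
    have ha1 : 1 - (n:ℝ)/t^M ≤ 1 := by
      have h0 : (0:ℝ) ≤ (n:ℝ)/t^M := div_nonneg hn0.le htMpos.le
      linarith
    have hexp1 : (1:ℝ)/2^(n-1) ≤ 1 := by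
      rw [div_le_one (by positivity)]
      calc (1:ℝ) = 1^(n-1) := (one_pow _).symm
        _ ≤ 2^(n-1) := pow_le_pow_left₀ zero_le_one one_le_two _
    have hu_lb : t * (1 - (n:ℝ)/t^M) ≤ u := by
      have e1 : t^M - (n:ℝ) = t^M * (1 - (n:ℝ)/t^M) := by field_simp
      have e2 : ((t^M * (1 - (n:ℝ)/t^M)) : ℝ) ^ ((1:ℝ)/2^(n-1))
          = (t^M) ^ ((1:ℝ)/2^(n-1)) * (1-(n:ℝ)/t^M) ^ ((1:ℝ)/2^(n-1)) :=
        Real.mul_rpow htMpos.le ha0.le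
      have e3 : ((t^M : ℝ)) ^ ((1:ℝ)/2^(n-1)) = t := by
        rw [← Real.rpow_natCast t M, ← Real.rpow_mul htpos.le, hMcast]
        rw [show (2:ℝ)^(n-1) * ((1:ℝ)/2^(n-1)) = 1 by field_simp, Real.rpow_one]
      have e4 : (1 - (n:ℝ)/t^M) ≤ (1-(n:ℝ)/t^M) ^ ((1:ℝ)/2^(n-1)) := by
        nth_rewrite 1 [← Real.rpow_one (1 - (n:ℝ)/t^M)]
        exact Real.rpow_le_rpow_of_exponent_ge ha0 ha1 hexp1
      have e5 : (t^M - (n:ℝ)) ^ ((1:ℝ)/2^(n-1)) ≤ u := by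
        rw [hudef]
        exact Real.rpow_le_rpow (by linarith only [hkey2, pow_pos hY'pos M]) hJ'real (by positivity)
      calc t * (1 - (n:ℝ)/t^M) ≤ t * (1-(n:ℝ)/t^M) ^ ((1:ℝ)/2^(n-1)) :=
            mul_le_mul_of_nonneg_left e4 htpos.le
        _ = (t^M - (n:ℝ)) ^ ((1:ℝ)/2^(n-1)) := by rw [e1, e2, e3]
        _ ≤ u := e5
    have hcoefu : (L + ε/2) * u ≤ (L + ε/2) * t + c₃ * (n:ℝ) := by
      have h1 : (L+ε/2) * u ≤ (L+ε/2) * (t * (1 - (n:ℝ)/t^M)) :=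
        mul_le_mul_of_nonpos_left hu_lb hLε2.le
      have h2 : t * ((n:ℝ)/t^M) ≤ (n:ℝ) := by
        have hd : t / t^M ≤ 1 := div_le_one_of_le₀ htM htMpos.le
        calc t * ((n:ℝ)/t^M) = (t/t^M) * n := by ring
          _ ≤ 1 * n := mul_le_mul_of_nonneg_right hd hn0.le
          _ = n := one_mul _
      have h3 : (-(L+ε/2)) * (t*((n:ℝ)/t^M)) ≤ c₃ * n :=
        mul_le_mul (by linarith) h2
          (mul_nonneg htpos.le (div_nonneg hn0.le htMpos.le)) (by linarith)
      linarith only [h1, h3]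
    have hlogt : Real.log t = (1/(2:ℝ)^n) * Real.log (I:ℝ) := by
      rw [htdef]; exact Real.log_rpow hIpos _
    have hlogI : Real.log (I:ℝ) = 2^n * Real.log t := by
      rw [hlogt]; field_simp
    have htY' : c₃ * X * Real.log X ≤ t := by rw [← hYdef]; exact htY
    have hkey := key_ineq hc₃2 hX8 htY'
    have hεt : c₃ * 48 ≤ ε * t := by
      have hεY : ε * Y = c₃ * (((n:ℝ)+1)*2^(n+1)) * Real.log X := by
        rw [hYdef, hXdef]; field_simp
      have h48 : c₃ * 48 ≤ ε * Y := by
        rw [hεY]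
        nlinarith only [hc₃2, h24, lX,
          mul_nonneg (mul_nonneg (show (0:ℝ) ≤ c₃ by linarith only [hc₃2])
            (show (0:ℝ) ≤ ((n:ℝ)+1)*2^(n+1) - 24 by linarith only [h24]))
            (show (0:ℝ) ≤ Real.log X by linarith only [lX]),
          mul_nonneg (show (0:ℝ) ≤ c₃ by linarith only [hc₃2])
            (show (0:ℝ) ≤ Real.log X - 2 by linarith only [lX])]
      have hmul := mul_le_mul_of_nonneg_left htY hε0.le
      linarith
    have hlog2 : Real.log 2 ≤ 1 := by
      have := Real.log_le_sub_one_of_pos (show (0:ℝ) < 2 by norm_num); linarith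
    have hterm1 : (1-c) ^ (Real.sqrt (I:ℝ) - 1) ≤ Real.exp ((L+ε)*t - Real.log 2) := by
      rw [Real.rpow_def_of_pos h1c, Real.exp_le_exp, hsqrt]
      have h1 : L * t^M ≤ L * t := by
        linarith only [mul_nonneg (show (0:ℝ) ≤ -L by linarith only [hLneg])
          (show (0:ℝ) ≤ t^M - t by linarith only [htM])]
      linarith only [h1, hεt, hlog2, hLc₃, hc₃2]
    have hterm2 : (I:ℝ) ^ (1 + ((n:ℝ)-1)/2) * Γ n J' ≤ Real.exp ((L+ε)*t - Real.log 2) := by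
      have hpowI : (I:ℝ) ^ (1+((n:ℝ)-1)/2) = Real.exp (Real.log (I:ℝ) * (1+((n:ℝ)-1)/2)) :=
        Real.rpow_def_of_pos hIpos _
      have hstep : (I:ℝ)^(1+((n:ℝ)-1)/2) * Γ n J'
          ≤ Real.exp (Real.log (I:ℝ) * (1+((n:ℝ)-1)/2) + (L+ε/2)*u) := by
        rw [Real.exp_add, ← hpowI]
        exact mul_le_mul_of_nonneg_left hΓn (Real.rpow_nonneg hIpos.le _)
      refine hstep.trans ?_
      rw [Real.exp_le_exp]
      have hc1 : Real.log (I:ℝ) * (1+((n:ℝ)-1)/2) = (ε*X/4) * Real.log t := by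
        rw [hlogI, hεX, pow_succ]; ring
      have hkey' : (ε/2) * (X/2*Real.log t + c₃*X/2) ≤ (ε/2)*t :=
        mul_le_mul_of_nonneg_left hkey (by linarith)
      have hεX4 : c₃*(n:ℝ) + 1 ≤ c₃*(ε*X)/4 := by
        rw [hεX]
        nlinarith only [hc₃2, hn0,
          mul_nonneg (mul_nonneg (show (0:ℝ) ≤ c₃ by linarith only [hc₃2])
            (show (0:ℝ) ≤ (n:ℝ)+1 by linarith only [hn0])) (show (0:ℝ) ≤ 2^(n+1) - 8 by linarith only [h2n8]),
          mul_nonneg (show (0:ℝ) ≤ c₃ by linarith only [hc₃2]) (show (0:ℝ) ≤ (n:ℝ) by linarith only [hn0])]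
      rw [hc1]
      linarith only [hcoefu, hkey', hεX4, hlog2]
    have hEhalf : Real.exp ((L+ε)*t - Real.log 2) = Real.exp ((L+ε)*t) / 2 := by
      rw [Real.exp_sub, Real.exp_log (by norm_num : (0:ℝ) < 2)]
    calc Γ (n+1) I ≤ (1-c) ^ (Real.sqrt (I:ℝ) - 1) + (I:ℝ)^(1+((n:ℝ)-1)/2) * Γ n J' := hrecn
      _ ≤ Real.exp ((L+ε)*t)/2 + Real.exp ((L+ε)*t)/2 := by
          rw [← hEhalf]; exact add_le_add hterm1 hterm2
      _ = Real.exp ((L+ε)*t) := by ring
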